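/- Let n, R ∈ ℕ with R ≤ n, and let A ⊆ B_n(R) be nonempty. Set ε := R/(2n), r₀ := min{ r ≤ R : |B_n(r)| ≥ ε|A| }, c := 1 − 1/(|B_n(R)|/|A| − ε), and for 0 ≤ r ≤ R let α_r := |A ∩ S_n(r)| / C(n,r). If c > 0 and 1 ≤ r₀ ≤ R − 1, then at least one of the following holds: (i) Σ_{r=r₀}^{R−1} |α_r − α_{r+1}| ≥ 4c/7, or (ii) α_r ≤ 1 − 3c/7 for every r with r₀ ≤ r ≤ R − 1. -/

import Mathlib

open Finset

/-- the family of subsets of `{1,…,n}` of size exactly `r` -/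
def sphere (n r : ℕ) : Finset (Finset (Fin n)) :=
  Finset.univ.filter (fun X => X.card = r)

/-- the family of subsets of `{1,…,n}` of size at most `R` -/
def hamBall (n R : ℕ) : Finset (Finset (Fin n)) :=
  Finset.univ.filter (fun X => X.card ≤ R)

/-- vertex boundary of `A` in the Hamming ball graph `B_n(R)`: vertices of the ball, not in
`A`, adjacent (symmetric difference of size one) to a member of `A` -/
def ballBoundary (n R : ℕ) (A : Finset (Finset (Fin n))) : Finset (Finset (Fin n)) :=
  (hamBall n R).filter (fun Y => Y ∉ A ∧ ∃ X ∈ A, (symmDiff X Y).card = 1)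

/-!
By minimality of `r₀`, the layers `r₀ ≤ k ≤ R` together contain
`|B_n(R)| - |B_n(r₀ - 1)| > |B_n(R)| - ε|A| = x|A|` sets, where `c = 1 - 1/x`. They contain at most
`|A|` members of `A`, so some layer `b` has density `α_b ≤ 1/x = 1 - c`. If (ii) fails at some `a`,
then `α_a - α_b > 4c/7`, while telescoping bounds `|α_a - α_b|` by the sum in (i).
-/

theorem abs_sub_le_sum_Ico_abs_sub_succ {α : Type*} [AddCommGroup α] [LinearOrder α]
    [IsOrderedAddMonoid α] (f : ℕ → α) {lo hi a b : ℕ} (ha : a ∈ Icc lo hi) (hb : b ∈ Icc lo hi) :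
    |f a - f b| ≤ ∑ r ∈ Ico lo hi, |f r - f (r + 1)| := by
  wlog hab : a ≤ b generalizing a b
  · rw [abs_sub_comm]
    exact this hb ha (le_of_not_ge hab)
  rw [mem_Icc] at ha hb
  calc |f a - f b| = |∑ r ∈ Ico a b, (f (r + 1) - f r)| := by rw [sum_Ico_sub f hab, abs_sub_comm]
    _ ≤ ∑ r ∈ Ico a b, |f r - f (r + 1)| :=
      (abs_sum_le_sum_abs _ _).trans_eq (sum_congr rfl fun _ _ => abs_sub_comm _ _)
    _ ≤ ∑ r ∈ Ico lo hi, |f r - f (r + 1)| :=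
      sum_le_sum_of_subset_of_nonneg (Ico_subset_Ico ha.1 hb.2) fun _ _ _ => abs_nonneg _

theorem card_sphere (n r : ℕ) : #(sphere n r) = n.choose r := by
  simp [sphere]

theorem card_hamBall (n R : ℕ) : #(hamBall n R) = ∑ r ∈ range (R + 1), n.choose r := by
  rw [card_eq_sum_card_fiberwise (f := card) (t := range (R + 1))]
  · refine sum_congr rfl fun r hr => ?_
    rw [← card_sphere]
    congr 1
    ext X
    simp only [hamBall, sphere, filter_filter, mem_filter, mem_univ, true_and, mem_range] at hr ⊢
    omega
  · intro X hX
    simp_all [hamBall]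

theorem card_hamBall_add_sum_choose_Ioc (n : ℕ) {r R : ℕ} (h : r ≤ R) :
    #(hamBall n r) + ∑ k ∈ Ioc r R, n.choose k = #(hamBall n R) := by
  rw [card_hamBall, card_hamBall, ← Ico_add_one_add_one_eq_Ioc, sum_range_add_sum_Ico _ (by omega)]

theorem sum_card_inter_sphere_le (n : ℕ) (A : Finset (Finset (Fin n))) (s : Finset ℕ) :
    ∑ r ∈ s, #(A ∩ sphere n r) ≤ #A := by
  have : ∀ r, A ∩ sphere n r = {X ∈ A | X.card = r} := fun r => by
    ext X; simp [sphere]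
  simp only [this, sum_card_fiberwise_eq_card_filter]
  exact card_filter_le _ _

theorem exists_card_inter_sphere_le (n : ℕ) (A : Finset (Finset (Fin n))) {s : Finset ℕ}
    (hs : s.Nonempty) {t : ℝ} (h : #A ≤ t * ∑ r ∈ s, (n.choose r : ℝ)) :
    ∃ r ∈ s, #(A ∩ sphere n r) ≤ t * n.choose r := by
  refine exists_le_of_sum_le hs ?_
  rw [← mul_sum]
  have : ∑ r ∈ s, (#(A ∩ sphere n r) : ℝ) ≤ #A := by
    exact_mod_cast sum_card_inter_sphere_le n A s
  exact this.trans h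

theorem div_two_mul_le_half {R n : ℕ} (h : R ≤ n) : (R : ℝ) / (2 * n) ≤ 1 / 2 := by
  rcases n.eq_zero_or_pos with rfl | hn
  · simp
  · rw [div_le_iff₀ (by positivity)]
    have : (R : ℝ) ≤ n := by exact_mod_cast h
    linarith

theorem density_dichotomy_general (n R : ℕ) (hRn : R ≤ n)
    (A : Finset (Finset (Fin n))) (hA : A ⊆ hamBall n R) (hAne : A.Nonempty)
    (ε : ℝ) (hε : ε = (R : ℝ) / (2 * n))
    (r₀ : ℕ) (hr₀R : r₀ ≤ R)
    (hr₀min : ∀ r : ℕ, r < r₀ → ((hamBall n r).card : ℝ) < ε * A.card)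
    (c : ℝ) (hc : c = 1 - 1 / (((hamBall n R).card : ℝ) / A.card - ε))
    (hcpos : 0 < c) (hr₀1 : 1 ≤ r₀)
    (α : ℕ → ℝ) (hα : ∀ r : ℕ, r ≤ R → α r = ((A ∩ sphere n r).card : ℝ) / (n.choose r)) :
    (∑ r ∈ Finset.Ico r₀ R, |α r - α (r + 1)| ≥ 4 * c / 7) ∨
    (∀ r : ℕ, r₀ ≤ r → r ≤ R - 1 → α r ≤ 1 - 3 * c / 7) := by
  refine or_iff_not_imp_right.mpr fun hall => ?_
  push Not at hall
  obtain ⟨a, har₀, haR, ha⟩ := hall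
  set x := (#(hamBall n R) : ℝ) / #A - ε with hx
  have hApos : (0 : ℝ) < #A := by exact_mod_cast hAne.card_pos
  have hxA : x * #A = #(hamBall n R) - ε * #A := by rw [hx]; field_simp
  have hxpos : 0 < x := by
    have : 1 ≤ (#(hamBall n R) : ℝ) / #A :=
      (one_le_div hApos).2 (by exact_mod_cast card_le_card hA)
    linarith [hε ▸ div_two_mul_le_half hRn]
  have hc' : 1 - c = x⁻¹ := by rw [hc, one_div, sub_sub_cancel]
  have hlayers : (#A : ℝ) ≤ (1 - c) * ∑ k ∈ Ioc (r₀ - 1) R, (n.choose k : ℝ) := by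
    rw [hc', inv_mul_eq_div, le_div_iff₀ hxpos]
    have hsplit := card_hamBall_add_sum_choose_Ioc n (show r₀ - 1 ≤ R by omega)
    have := hr₀min (r₀ - 1) (by omega)
    rw [← hsplit] at hxA
    push_cast at hxA
    linarith
  obtain ⟨b, hb, hAb⟩ := exists_card_inter_sphere_le n A (nonempty_Ioc.2 (by omega)) hlayers
  rw [mem_Ioc] at hb
  have hαb : α b ≤ 1 - c := hα b hb.2 ▸
    div_le_of_le_mul₀ (by positivity) (by rw [hc']; positivity) hAb
  have := abs_sub_le_sum_Ico_abs_sub_succ α (lo := r₀) (hi := R) (a := a) (b := b)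
    (mem_Icc.2 ⟨har₀, by omega⟩) (mem_Icc.2 ⟨by omega, hb.2⟩)
  linarith [le_abs_self (α a - α b)]

/-- With `ε := R/(2n)`, `r₀ := min{r ≤ R : |B_n(r)| ≥ ε|A|}`,
`c := 1 − 1/(|B_n(R)|/|A| − ε)` and `α_r := |A ∩ S_n(r)|/C(n,r)`, if `c > 0` and
`1 ≤ r₀ ≤ R − 1`, then either `Σ_{r=r₀}^{R−1} |α_r − α_{r+1}| ≥ 4c/7`, or
`α_r ≤ 1 − 3c/7` for all `r₀ ≤ r ≤ R − 1`. -/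
theorem density_dichotomy (n R : ℕ) (hRn : R ≤ n)
    (A : Finset (Finset (Fin n))) (hA : A ⊆ hamBall n R) (hAne : A.Nonempty)
    (ε : ℝ) (hε : ε = (R : ℝ) / (2 * n))
    (r₀ : ℕ) (hr₀R : r₀ ≤ R)
    (hr₀ge : ε * A.card ≤ ((hamBall n r₀).card : ℝ))
    (hr₀min : ∀ r : ℕ, r < r₀ → ((hamBall n r).card : ℝ) < ε * A.card)
    (c : ℝ) (hc : c = 1 - 1 / (((hamBall n R).card : ℝ) / A.card - ε))
    (hcpos : 0 < c) (hr₀1 : 1 ≤ r₀) (hr₀R1 : r₀ ≤ R - 1)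
    (α : ℕ → ℝ) (hα : ∀ r : ℕ, r ≤ R → α r = ((A ∩ sphere n r).card : ℝ) / (n.choose r)) :
    (∑ r ∈ Finset.Ico r₀ R, |α r - α (r + 1)| ≥ 4 * c / 7) ∨
    (∀ r : ℕ, r₀ ≤ r → r ≤ R - 1 → α r ≤ 1 - 3 * c / 7) :=
  density_dichotomy_general n R hRn A hA hAne ε hε r₀ hr₀R hr₀min c hc hcpos hr₀1 α hα
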